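/- Let Q₃ : ℝ^{3×3} → ℝ be a quadratic form (i.e. Q₃(F) = B(F,F) for a symmetric bilinear form B) such that Q₃(F) = Q₃(sym F) for all F and Q₃ is positive definite on symmetric matrices. Then for every π ∈ ℝ and every symmetric G ∈ ℝ^{2×2}, the infima defining Q₂(G) := inf_{a∈ℝ³} Q₃(ι(G) + a⊗e₃) and Q₂^π(G) := inf_{a∈ℝ³} { Q₃(ι(G) + a⊗e₃) + 2π a₃ } are attained, and there exist a linear map ℒ from symmetric 2×2 matrices to ℝ and a constant κ ∈ ℝ, both depending only on Q₃ (not on π or G), such that Q₂^π(G) = Q₂(G) + π ℒ(G) + π² κ for all symmetric G ∈ ℝ^{2×2} and all π ∈ ℝ. -/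

import Mathlib

/-!
Put `b x y := B (x ⊗ e₃) (y ⊗ e₃)`. Then `Q₃ (ι G + x ⊗ e₃) + 2 π x₃ = c + b x x + 2 φ x` with
`c = B (ι G) (ι G)` and `φ = B (ι G) (· ⊗ e₃) + π e₃*`. Since `Q₃` only sees `sym`, and
`sym (x ⊗ e₃) ≠ 0` for `x ≠ 0`, the form `b` is positive definite. Hence `b a · = -φ` has a
solution `a`, and completing the square shows that it is a minimizer, with value `c - b a a`.
The solution can be taken affine in `π`, namely `a_G + π d` with `b d · = -e₃*`, so the
minimum is `Q₂(G) + π · 2 B (ι G) (d ⊗ e₃) - π² b d d`.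
-/

noncomputable section

/-- Embedding of a `2 × 2` matrix into `3 × 3` matrices (upper-left block). -/
def iota (G : Matrix (Fin 2) (Fin 2) ℝ) : Matrix (Fin 3) (Fin 3) ℝ :=
  Matrix.of fun i j =>
    if hi : (i : ℕ) < 2 then
      if hj : (j : ℕ) < 2 then G ⟨(i : ℕ), hi⟩ ⟨(j : ℕ), hj⟩ else 0
    else 0

/-- The matrix `a ⊗ e₃`, whose third column is `a` and whose other columns vanish. -/
def col3 (a : Fin 3 → ℝ) : Matrix (Fin 3) (Fin 3) ℝ :=
  Matrix.of fun i j => if j = 2 then a i else 0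

/-- `Q₂(G) = inf_{a ∈ ℝ³} Q₃(ι(G) + a ⊗ e₃)`. -/
def Q2 (Q₃ : Matrix (Fin 3) (Fin 3) ℝ → ℝ) (G : Matrix (Fin 2) (Fin 2) ℝ) : ℝ :=
  sInf (Set.range fun a : Fin 3 → ℝ => Q₃ (iota G + col3 a))

/-- `Q₂^π(G) = inf_{a ∈ ℝ³} { Q₃(ι(G) + a ⊗ e₃) + 2 π a₃ }`. -/
def Q2pi (Q₃ : Matrix (Fin 3) (Fin 3) ℝ → ℝ) (π : ℝ) (G : Matrix (Fin 2) (Fin 2) ℝ) : ℝ :=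
  sInf (Set.range fun a : Fin 3 → ℝ => Q₃ (iota G + col3 a) + 2 * π * a 2)

namespace LinearMap.BilinForm

variable {V : Type*} [AddCommGroup V] [Module ℝ V] {b : LinearMap.BilinForm ℝ V}

lemma nondegenerate_of_apply_self_pos (hpos : ∀ x, x ≠ 0 → 0 < b x x) : b.Nondegenerate :=
  ⟨fun x hx => by_contra fun h => (hpos x h).ne' (hx x),
    fun y hy => by_contra fun h => (hpos y h).ne' (hy y)⟩

lemma exists_apply_eq_neg [FiniteDimensional ℝ V] (hpos : ∀ x, x ≠ 0 → 0 < b x x)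
    (φ : V →ₗ[ℝ] ℝ) : ∃ a, ∀ h, b a h = -φ h :=
  ⟨(b.toDual (nondegenerate_of_apply_self_pos hpos)).symm (-φ), fun h => by simp⟩

lemma IsPosSemidef.isLeast_of_apply_eq_neg (hb : b.IsPosSemidef) {φ : V →ₗ[ℝ] ℝ} {a : V}
    (ha : ∀ h, b a h = -φ h) (c : ℝ) :
    IsLeast (Set.range fun x => c + b x x + 2 * φ x) (c + b a a + 2 * φ a) := by
  refine ⟨⟨a, rfl⟩, ?_⟩
  rintro _ ⟨x, rfl⟩
  have hsq : b (x - a) (x - a) = b x x - b a x - b x a + b a a := by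
    simp only [map_sub, LinearMap.sub_apply]; ring
  have := hb.isNonneg.nonneg (x - a)
  linarith [ha x, ha a, hb.isSymm.eq a x]

lemma apply_add_smul_eq_neg {φ ψ : V →ₗ[ℝ] ℝ} {a d : V} (ha : ∀ h, b a h = -φ h)
    (hd : ∀ h, b d h = -ψ h) (t : ℝ) (h : V) : b (a + t • d) h = -(φ + t • ψ) h := by
  simp only [map_add, map_smul, LinearMap.add_apply, LinearMap.smul_apply, smul_eq_mul, ha, hd]
  ring

lemma IsSymm.value_add_smul (hb : b.IsSymm) {φ ψ : V →ₗ[ℝ] ℝ} {a d : V}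
    (hd : ∀ h, b d h = -ψ h) (c t : ℝ) :
    c + b (a + t • d) (a + t • d) + 2 * (φ + t • ψ) (a + t • d) =
      (c + b a a + 2 * φ a) + t * (2 * φ d) + t ^ 2 * (-b d d) := by
  simp only [map_add, map_smul, LinearMap.add_apply, LinearMap.smul_apply, smul_eq_mul]
  linear_combination (-t) * hb.eq d a + 2 * t * hd a + 2 * t ^ 2 * hd d

end LinearMap.BilinForm

open LinearMap.BilinForm

def iotaLinearMap : Matrix (Fin 2) (Fin 2) ℝ →ₗ[ℝ] Matrix (Fin 3) (Fin 3) ℝ where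
  toFun := iota
  map_add' G H := by
    ext i j; simp only [iota, Matrix.of_apply, Matrix.add_apply]; split_ifs <;> simp
  map_smul' c G := by
    ext i j; simp only [iota, Matrix.of_apply, Matrix.smul_apply]; split_ifs <;> simp

@[simps]
def col3LinearMap : (Fin 3 → ℝ) →ₗ[ℝ] Matrix (Fin 3) (Fin 3) ℝ where
  toFun := col3
  map_add' a b := by
    ext i j; simp only [col3, Matrix.of_apply, Matrix.add_apply]; split_ifs <;> simp
  map_smul' c a := by
    ext i j; simp only [col3, Matrix.of_apply, Matrix.smul_apply]; split_ifs <;> simp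

lemma eq_zero_of_col3_add_transpose_eq_zero {x : Fin 3 → ℝ}
    (h : col3 x + (col3 x).transpose = 0) : x = 0 := by
  have hcol : ∀ i, x i + (if i = 2 then x 2 else 0) = 0 := by
    simpa [col3] using fun i => congrFun (congrFun h i) 2
  funext i
  fin_cases i
  · simpa using hcol 0
  · simpa using hcol 1
  · simpa using hcol 2

lemma apply_col3_self_pos (Q₃ : Matrix (Fin 3) (Fin 3) ℝ → ℝ)
    (B : Matrix (Fin 3) (Fin 3) ℝ →ₗ[ℝ] Matrix (Fin 3) (Fin 3) ℝ →ₗ[ℝ] ℝ)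
    (hQB : ∀ F, Q₃ F = B F F) (hQsym : ∀ F, Q₃ F = Q₃ ((1 / 2 : ℝ) • (F + F.transpose)))
    (hQpos : ∀ F : Matrix (Fin 3) (Fin 3) ℝ, F.transpose = F → F ≠ 0 → 0 < Q₃ F)
    {x : Fin 3 → ℝ} (hx : x ≠ 0) : 0 < B (col3 x) (col3 x) := by
  rw [← hQB, hQsym]
  refine hQpos _ (by rw [Matrix.transpose_smul, Matrix.transpose_add, Matrix.transpose_transpose,
    add_comm]) fun h => hx (eq_zero_of_col3_add_transpose_eq_zero ?_)
  exact (smul_eq_zero.mp h).resolve_left (by norm_num)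

lemma apply_iota_add_col3_add (Q₃ : Matrix (Fin 3) (Fin 3) ℝ → ℝ)
    (B : Matrix (Fin 3) (Fin 3) ℝ →ₗ[ℝ] Matrix (Fin 3) (Fin 3) ℝ →ₗ[ℝ] ℝ)
    (hBsymm : ∀ F G, B F G = B G F) (hQB : ∀ F, Q₃ F = B F F)
    (π : ℝ) (G : Matrix (Fin 2) (Fin 2) ℝ) (x : Fin 3 → ℝ) :
    Q₃ (iota G + col3 x) + 2 * π * x 2 =
      B (iota G) (iota G) + B.compl₁₂ col3LinearMap col3LinearMap x x +
        2 * ((B (iota G)).comp col3LinearMap + π • (LinearMap.proj 2 : (Fin 3 → ℝ) →ₗ[ℝ] ℝ)) x := by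
  simp only [hQB, map_add, LinearMap.add_apply, LinearMap.compl₁₂_apply, LinearMap.comp_apply,
    LinearMap.smul_apply, LinearMap.proj_apply, smul_eq_mul, col3LinearMap_apply,
    hBsymm (col3 x) (iota G)]
  ring

theorem stmt1 (Q₃ : Matrix (Fin 3) (Fin 3) ℝ → ℝ)
    (B : Matrix (Fin 3) (Fin 3) ℝ →ₗ[ℝ] Matrix (Fin 3) (Fin 3) ℝ →ₗ[ℝ] ℝ)
    (hBsymm : ∀ F G : Matrix (Fin 3) (Fin 3) ℝ, B F G = B G F)
    (hQB : ∀ F : Matrix (Fin 3) (Fin 3) ℝ, Q₃ F = B F F)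
    (hQsym : ∀ F : Matrix (Fin 3) (Fin 3) ℝ, Q₃ F = Q₃ ((1 / 2 : ℝ) • (F + F.transpose)))
    (hQpos : ∀ F : Matrix (Fin 3) (Fin 3) ℝ, F.transpose = F → F ≠ 0 → 0 < Q₃ F) :
    (∀ (π : ℝ) (G : Matrix (Fin 2) (Fin 2) ℝ), G.transpose = G →
      (∃ a : Fin 3 → ℝ, IsLeast
        (Set.range fun b : Fin 3 → ℝ => Q₃ (iota G + col3 b))
        (Q₃ (iota G + col3 a))) ∧
      (∃ a : Fin 3 → ℝ, IsLeast
        (Set.range fun b : Fin 3 → ℝ => Q₃ (iota G + col3 b) + 2 * π * b 2)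
        (Q₃ (iota G + col3 a) + 2 * π * a 2))) ∧
    (∃ (L : Matrix (Fin 2) (Fin 2) ℝ →ₗ[ℝ] ℝ) (κ : ℝ),
      ∀ (π : ℝ) (G : Matrix (Fin 2) (Fin 2) ℝ), G.transpose = G →
        Q2pi Q₃ π G = Q2 Q₃ G + π * L G + π ^ 2 * κ) := by
  set b : LinearMap.BilinForm ℝ (Fin 3 → ℝ) := B.compl₁₂ col3LinearMap col3LinearMap
  have hpos : ∀ x, x ≠ 0 → 0 < b x x := fun _ => apply_col3_self_pos Q₃ B hQB hQsym hQpos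
  have hb : b.IsPosSemidef := ⟨⟨fun x y => hBsymm _ _⟩, ⟨fun x => by
    rcases eq_or_ne x 0 with rfl | hx
    · simp
    · exact (hpos x hx).le⟩⟩
  obtain ⟨d, hd⟩ := exists_apply_eq_neg hpos (LinearMap.proj 2)
  choose a ha using fun G => exists_apply_eq_neg hpos ((B (iota G)).comp col3LinearMap)
  have hleast : ∀ π G, IsLeast (Set.range fun x => Q₃ (iota G + col3 x) + 2 * π * x 2)
      (Q₃ (iota G + col3 (a G + π • d)) + 2 * π * (a G + π • d) 2) := fun π G => by
    simp only [apply_iota_add_col3_add Q₃ B hBsymm hQB π G]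
    exact hb.isLeast_of_apply_eq_neg (apply_add_smul_eq_neg (ha G) hd π) _
  have hleast₀ : ∀ G, IsLeast (Set.range fun x => Q₃ (iota G + col3 x))
      (Q₃ (iota G + col3 (a G))) := fun G => by
    simpa using hleast 0 G
  refine ⟨fun π G _ => ⟨⟨a G, hleast₀ G⟩, ⟨_, hleast π G⟩⟩,
    (2 : ℝ) • (B.flip (col3 d)).comp iotaLinearMap, -b d d, fun π G _ => ?_⟩
  rw [Q2pi, (hleast π G).csInf_eq, Q2, (hleast₀ G).csInf_eq,
    apply_iota_add_col3_add Q₃ B hBsymm hQB, hb.isSymm.value_add_smul hd]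
  have h₀ := apply_iota_add_col3_add Q₃ B hBsymm hQB 0 G (a G)
  simp only [mul_zero, zero_mul, zero_smul, add_zero] at h₀
  rw [h₀]
  rfl
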